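/- Let K ⊂ ℂ be compact and f holomorphic and injective on an open neighborhood U of K with f′ nonvanishing on K. Then there exists η > 0 such that every holomorphic function g on U with sup_{K} |g − f| < η restricted to a slightly smaller compact set is injective, provided K is the closure of its interior and g is additionally close to f in C¹-norm on that smaller set via Cauchy estimates. More precisely: for compact sets K' ⊂ interior(K), there is η > 0 so that sup_K |g−f| < η implies g is injective on K'. -/

import Mathlib

/-!
Points of `K'` at distance at least `ρ` are mapped by `f` at distance at least some `c > 0`
(compactness and injectivity), so a perturbation by less than `c / 2` cannot identify them.
Nearer points lie in a small ball on which `f'` stays within `m / 2` of its value at the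
centre, where `m = min_K |f'|`. Since `|g - f| < η` on `K`, the Cauchy estimate on discs of radius
`r` inside `K` gives `|g' - f'| ≤ η / r`, so `g'` stays within less than `m` of that value, and
the mean value inequality makes `g` injective on the ball.
-/

open Set Metric

theorem Convex.injOn_of_norm_hasDerivWithinAt_sub_le {𝕜 : Type*} [RCLike 𝕜] {φ φ' : 𝕜 → 𝕜}
    {s : Set 𝕜} {a : 𝕜} {C : ℝ} (hs : Convex ℝ s) (hφ : ∀ z ∈ s, HasDerivWithinAt φ (φ' z) s z)
    (hφ' : ∀ z ∈ s, ‖φ' z - a‖ ≤ C) (hC : C < ‖a‖) : InjOn φ s := by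
  intro x hx y hy hxy
  have hlin := hs.norm_image_sub_le_of_norm_hasDerivWithin_le
    (fun z hz => by simpa using (hφ z hz).sub ((hasDerivWithinAt_id z s).const_mul a)) hφ' hx hy
  have : ‖a‖ * ‖x - y‖ ≤ C * ‖y - x‖ := by
    simpa [hxy, ← mul_sub, norm_mul] using hlin
  rw [norm_sub_rev y x] at this
  by_contra hne
  have : 0 < ‖x - y‖ := norm_pos_iff.2 (sub_ne_zero.2 hne)
  nlinarith

theorem Complex.norm_deriv_sub_le_of_forall_mem_sphere {f g : ℂ → ℂ} {z : ℂ} {r η : ℝ}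
    (hr : 0 < r) (hf : DifferentiableOn ℂ f (closedBall z r))
    (hg : DifferentiableOn ℂ g (closedBall z r)) (hfg : ∀ w ∈ sphere z r, ‖g w - f w‖ ≤ η) :
    ‖deriv g z - deriv f z‖ ≤ η / r := by
  have hz := closedBall_mem_nhds z hr
  rw [← deriv_sub (hg.differentiableAt hz) (hf.differentiableAt hz)]
  exact norm_deriv_le_of_forall_mem_sphere_norm_le hr ((hg.sub hf).diffContOnCl_ball le_rfl) hfg

theorem Complex.injOn_ball_of_norm_sub_le {f g : ℂ → ℂ} {x : ℂ} {ρ r η ε : ℝ} (hr : 0 < r)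
    (hf : DifferentiableOn ℂ f (closedBall x (ρ + r)))
    (hg : DifferentiableOn ℂ g (closedBall x (ρ + r)))
    (hfg : ∀ w ∈ closedBall x (ρ + r), ‖g w - f w‖ ≤ η)
    (hosc : ∀ z ∈ ball x ρ, ‖deriv f z - deriv f x‖ ≤ ε) (hlt : ε + η / r < ‖deriv f x‖) :
    InjOn g (ball x ρ) := by
  have hball : ∀ z ∈ ball x ρ, closedBall z r ⊆ closedBall x (ρ + r) := fun z hz =>
    closedBall_subset_closedBall' (by linarith [mem_ball.1 hz])
  refine (convex_ball x ρ).injOn_of_norm_hasDerivWithinAt_sub_le (φ' := deriv g)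
    (fun z hz => ?_) (fun z hz => ?_) hlt
  · exact ((hg.mono (hball z hz)).differentiableAt
      (closedBall_mem_nhds z hr)).hasDerivAt.hasDerivWithinAt
  · calc ‖deriv g z - deriv f x‖ ≤ ‖deriv g z - deriv f z‖ + ‖deriv f z - deriv f x‖ :=
          norm_sub_le_norm_sub_add_norm_sub _ _ _
      _ ≤ η / r + ε := add_le_add
          (norm_deriv_sub_le_of_forall_mem_sphere hr (hf.mono (hball z hz))
            (hg.mono (hball z hz)) fun w hw => hfg w (hball z hz (sphere_subset_closedBall hw)))
          (hosc z hz)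
      _ = ε + η / r := add_comm _ _

theorem IsCompact.exists_pos_le_dist_of_injOn {α β : Type*} [PseudoMetricSpace α]
    [MetricSpace β] {K : Set α} {f : α → β} {δ : ℝ} (hK : IsCompact K)
    (hf : ContinuousOn f K) (hinj : InjOn f K) (hδ : 0 < δ) :
    ∃ c > 0, ∀ x ∈ K, ∀ y ∈ K, δ ≤ dist x y → c ≤ dist (f x) (f y) := by
  set S := K ×ˢ K ∩ {p : α × α | δ ≤ dist p.1 p.2}
  have hS : IsCompact S := (hK.prod hK).inter_right (isClosed_le continuous_const continuous_dist)
  have hcont : ContinuousOn (fun p : α × α => dist (f p.1) (f p.2)) S :=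
    continuous_dist.comp_continuousOn <| (hf.comp continuousOn_fst fun p hp => hp.1.1).prodMk
      (hf.comp continuousOn_snd fun p (hp : p ∈ S) => hp.1.2)
  obtain ⟨c, hc, hcS⟩ := hS.exists_forall_le' hcont fun p ⟨⟨hp₁, hp₂⟩, hp⟩ =>
    dist_pos.2 fun h => by rw [mem_ofPred_eq, hinj hp₁ hp₂ h, dist_self] at hp; linarith
  exact ⟨c, hc, fun x hx y hy hxy => hcS (x, y) ⟨⟨hx, hy⟩, hxy⟩⟩

theorem injOn_of_forall_injOn_ball {α β : Type*} [PseudoMetricSpace α] [PseudoMetricSpace β]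
    {f g : α → β} {s : Set α} {δ c : ℝ}
    (hsep : ∀ x ∈ s, ∀ y ∈ s, δ ≤ dist x y → c ≤ dist (f x) (f y))
    (hfg : ∀ x ∈ s, dist (g x) (f x) < c / 2) (hloc : ∀ x ∈ s, InjOn g (ball x δ)) :
    InjOn g s := by
  intro x hx y hy hxy
  rcases lt_or_ge (dist x y) δ with hclose | hfar
  · exact hloc x hx (mem_ball_self (dist_nonneg.trans_lt hclose))
      (mem_ball.2 (by rwa [dist_comm])) hxy
  · have hgx := hfg x hx
    have := (hsep x hx y hy hfar).trans (dist_triangle4 (f x) (g x) (g y) (f y))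
    rw [hxy] at hgx
    rw [hxy, dist_self, dist_comm] at this
    linarith [hfg y hy]

theorem stmt6_general (U : Set ℂ) (hU : IsOpen U) (K K' : Set ℂ) (hK : IsCompact K)
    (hKU : K ⊆ U)
    (hK' : IsCompact K') (hK'K : K' ⊆ interior K)
    (f : ℂ → ℂ) (hf : DifferentiableOn ℂ f U) (hfinj : Set.InjOn f U)
    (hf' : ∀ z ∈ K, deriv f z ≠ 0) :
    ∃ η > 0, ∀ g : ℂ → ℂ, DifferentiableOn ℂ g U →
      (∀ z ∈ K, ‖g z - f z‖ < η) → Set.InjOn g K' := by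
  obtain ⟨δ, hδ, hδK⟩ := hK'.exists_cthickening_subset_open isOpen_interior hK'K
  have hK'K₀ : K' ⊆ K := hK'K.trans interior_subset
  have hf'K : ContinuousOn (deriv f) K := (hf.analyticOnNhd hU).deriv.continuousOn.mono hKU
  obtain ⟨m, hm, hmK⟩ := hK.exists_forall_le' hf'K.norm fun z hz => norm_pos_iff.2 (hf' z hz)
  obtain ⟨ρ, hρ, hρK⟩ := uniformContinuousOn_iff.1
    (hK.uniformContinuousOn_of_continuous hf'K) (m / 2) (by positivity)
  obtain ⟨c, hc, hcK'⟩ := hK'.exists_pos_le_dist_of_injOn (hf.continuousOn.mono (hK'K₀.trans hKU))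
    (hfinj.mono (hK'K₀.trans hKU)) (lt_min hρ (half_pos hδ))
  refine ⟨min (c / 2) (m * δ / 8), by positivity, fun g hg hgf => ?_⟩
  refine injOn_of_forall_injOn_ball hcK' (fun x hx => ?_) fun x hx => ?_
  · rw [dist_eq_norm]
    exact (hgf x (hK'K₀ hx)).trans_le (min_le_left _ _)
  have hsub : closedBall x (min ρ (δ / 2) + δ / 2) ⊆ K :=
    ((closedBall_subset_closedBall (by linarith [min_le_right ρ (δ / 2)])).trans
      ((closedBall_subset_cthickening hx δ).trans hδK)).trans interior_subset
  have hxK : x ∈ K := hsub (mem_closedBall_self (by positivity))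
  refine Complex.injOn_ball_of_norm_sub_le (ε := m / 2) (η := m * δ / 8) (half_pos hδ)
    (hf.mono (hsub.trans hKU)) (hg.mono (hsub.trans hKU))
    (fun w hw => (hgf w (hsub hw)).le.trans (min_le_right _ _)) (fun z hz => ?_) ?_
  · rw [← dist_eq_norm]
    exact (hρK z (hsub (ball_subset_closedBall.trans (closedBall_subset_closedBall
      (by linarith)) hz)) x hxK ((mem_ball.1 hz).trans_le (min_le_left _ _))).le
  · have : m * δ / 8 / (δ / 2) = m / 4 := by field_simp; ring
    linarith [hmK x hxK]

/-- stability of injectivity. If `f` is holomorphic and injective on an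
open neighbourhood `U` of the compact set `K` (which is the closure of its interior)
with nonvanishing derivative on `K`, and `K' ⊆ interior K` is compact, then there is
`η > 0` such that every holomorphic `g` on `U` with `sup_K |g − f| < η` is injective
on `K'`. -/
theorem stmt6 (U : Set ℂ) (hU : IsOpen U) (K K' : Set ℂ) (hK : IsCompact K)
    (hKU : K ⊆ U) (hKreg : closure (interior K) = K)
    (hK' : IsCompact K') (hK'K : K' ⊆ interior K)
    (f : ℂ → ℂ) (hf : DifferentiableOn ℂ f U) (hfinj : Set.InjOn f U)
    (hf' : ∀ z ∈ K, deriv f z ≠ 0) :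
    ∃ η > 0, ∀ g : ℂ → ℂ, DifferentiableOn ℂ g U →
      (∀ z ∈ K, ‖g z - f z‖ < η) → Set.InjOn g K' :=
  stmt6_general U hU K K' hK hKU hK' hK'K f hf hfinj hf'
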